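/- The function under the parameter-shift rule f(θ) = ⟨ψ₀| R_Γ(θ)† O R_Γ(θ) |ψ₀⟩, with Γ² = I, can be written as f(θ) = A + B cos θ + C sin θ for real constants A, B, C depending only on O, Γ, ψ₀. -/

import Mathlib

/-!
`R(θ)` is affine-linear in `(cos (θ/2), sin (θ/2))`, so `R(θ)ᴴ O R(θ)` is a quadratic form in these
two numbers with matrix coefficients, and so is its real expectation value in `ψ₀`. The double-angle
formulas turn any real quadratic form in `cos (θ/2)` and `sin (θ/2)` into `A + B cos θ + C sin θ`.
-/

open Matrix

theorem Real.cos_sin_half_quadratic_eq (a b d θ : ℝ) :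
    a * Real.cos (θ / 2) ^ 2 + b * Real.sin (θ / 2) ^ 2 + d * (Real.cos (θ / 2) * Real.sin (θ / 2))
      = (a + b) / 2 + (a - b) / 2 * Real.cos θ + d / 2 * Real.sin θ := by
  have hcos : Real.cos θ = Real.cos (θ / 2) ^ 2 - Real.sin (θ / 2) ^ 2 := by
    rw [← Real.cos_two_mul', mul_div_cancel₀ θ two_ne_zero]
  have hsin : Real.sin θ = 2 * Real.sin (θ / 2) * Real.cos (θ / 2) := by
    rw [← Real.sin_two_mul, mul_div_cancel₀ θ two_ne_zero]
  rw [hcos, hsin]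
  linear_combination (a + b) / 2 * Real.sin_sq_add_cos_sq (θ / 2)

namespace Matrix

variable {n : Type*} [Fintype n] [DecidableEq n]

theorem conjTranspose_rotation_mul_mul_rotation (Γ O : Matrix n n ℂ) (c s : ℝ) :
    ((c : ℂ) • 1 - (Complex.I * s) • Γ)ᴴ * O * ((c : ℂ) • 1 - (Complex.I * s) • Γ)
      = (c ^ 2) • O + (s ^ 2) • (Γᴴ * O * Γ) + (c * s) • (Complex.I • (Γᴴ * O - O * Γ)) := by
  simp only [conjTranspose_sub, conjTranspose_smul, conjTranspose_one, star_mul',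
    Complex.star_def, Complex.conj_I, Complex.conj_ofReal, sub_mul, mul_sub, smul_mul_assoc,
    mul_smul_comm, one_mul, mul_one, smul_sub, smul_smul]
  match_scalars <;> simp only [Complex.coe_algebraMap]
  · ring
  · ring
  · ring
  · linear_combination (-(s : ℂ) ^ 2) * Complex.I_sq

def expectationRe (ψ : n → ℂ) : Matrix n n ℂ →ₗ[ℝ] ℝ where
  toFun M := (star ψ ⬝ᵥ M *ᵥ ψ).re
  map_add' M N := by simp only [add_mulVec, dotProduct_add, Complex.add_re]
  map_smul' r M := by
    simp only [smul_mulVec, dotProduct_smul, Complex.smul_re, RingHom.id_apply, smul_eq_mul]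

end Matrix

theorem parameter_shift_trig_form_general (Γ O : Matrix (Fin 2) (Fin 2) ℂ)
    (ψ₀ : Fin 2 → ℂ) :
    let R : ℝ → Matrix (Fin 2) (Fin 2) ℂ := fun θ =>
      (Real.cos (θ / 2) : ℂ) • (1 : Matrix (Fin 2) (Fin 2) ℂ)
        - (Complex.I * Real.sin (θ / 2)) • Γ
    let f : ℝ → ℝ := fun θ =>
      (star ψ₀ ⬝ᵥ ((R θ).conjTranspose * O * R θ).mulVec ψ₀).re
    ∃ A B C : ℝ, ∀ θ : ℝ, f θ = A + B * Real.cos θ + C * Real.sin θ := by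
  intro R f
  set L := expectationRe ψ₀
  set X := Γᴴ * O * Γ
  set Y := Complex.I • (Γᴴ * O - O * Γ)
  refine ⟨(L O + L X) / 2, (L O - L X) / 2, L Y / 2, fun θ => ?_⟩
  calc f θ = L ((R θ)ᴴ * O * R θ) := rfl
    _ = L O * Real.cos (θ / 2) ^ 2 + L X * Real.sin (θ / 2) ^ 2
          + L Y * (Real.cos (θ / 2) * Real.sin (θ / 2)) := by
      simp only [R, conjTranspose_rotation_mul_mul_rotation, map_add, map_smul, smul_eq_mul]
      ring
    _ = _ := Real.cos_sin_half_quadratic_eq _ _ _ θ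

theorem parameter_shift_trig_form (Γ O : Matrix (Fin 2) (Fin 2) ℂ)
    (hΓherm : Γ.conjTranspose = Γ) (hΓsq : Γ * Γ = 1)
    (hOherm : O.conjTranspose = O) (ψ₀ : Fin 2 → ℂ) :
    let R : ℝ → Matrix (Fin 2) (Fin 2) ℂ := fun θ =>
      (Real.cos (θ / 2) : ℂ) • (1 : Matrix (Fin 2) (Fin 2) ℂ)
        - (Complex.I * Real.sin (θ / 2)) • Γ
    let f : ℝ → ℝ := fun θ =>
      (star ψ₀ ⬝ᵥ ((R θ).conjTranspose * O * R θ).mulVec ψ₀).re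
    ∃ A B C : ℝ, ∀ θ : ℝ, f θ = A + B * Real.cos θ + C * Real.sin θ :=
  parameter_shift_trig_form_general Γ O ψ₀
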